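/- arXiv:1112.0266 — 2 statements merged into one kernel-verified Lean document; each statement's English description precedes it below -/
import Mathlib

section
/- The transition density of the Brownian taboo process on (0,a) satisfies: there is a universal constant C such that for all x,y ∈ (0,a) and t > 0, |p^{taboo}_t(x,y) − (2/a) sin²(π y/a)| ≤ C (2/a) sin²(π y/a) E_{t/a²}, where E_s = ∑_{n=2}^∞ n² e^{-π²(n²-1)s/2} and p^{taboo}_t(x,y) = (sin(π y/a)/sin(π x/a)) e^{π² t/(2a²)} p^a_t(x,y) with p^a_t the killed Brownian transition density. -/
open Real

/-- Transition density of Brownian motion killed upon leaving `(0,a)`, via its sine series. -/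
noncomputable def killedDensity (a t x y : ℝ) : ℝ :=
  (2 / a) * ∑' n : ℕ, Real.exp (-π ^ 2 * ((n : ℝ) + 1) ^ 2 * t / (2 * a ^ 2)) *
    Real.sin (π * ((n : ℝ) + 1) * x / a) * Real.sin (π * ((n : ℝ) + 1) * y / a)

/-- Transition density of the Brownian taboo process on `(0,a)`. -/
noncomputable def tabooDensity (a t x y : ℝ) : ℝ :=
  (Real.sin (π * y / a) / Real.sin (π * x / a)) * Real.exp (π ^ 2 * t / (2 * a ^ 2)) *
    killedDensity a t x y

/-- The error series `E_s = ∑_{n≥2} n² e^{-π²(n²-1)s/2}`. -/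
noncomputable def Eseries (s : ℝ) : ℝ :=
  ∑' n : ℕ, ((n : ℝ) + 2) ^ 2 * Real.exp (-π ^ 2 * (((n : ℝ) + 2) ^ 2 - 1) * s / 2)

/-- `|sin (n x)| ≤ n |sin x|`. -/
lemma abs_sin_nmul (n : ℕ) (x : ℝ) : |Real.sin ((n : ℝ) * x)| ≤ (n : ℝ) * |Real.sin x| := by
  induction n with
  | zero => simp
  | succ n ih =>
    have h : ((n : ℝ) + 1) * x = (n : ℝ) * x + x := by ring
    push_cast
    rw [h, Real.sin_add]
    calc |Real.sin ((n : ℝ) * x) * Real.cos x + Real.cos ((n : ℝ) * x) * Real.sin x|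
        ≤ |Real.sin ((n : ℝ) * x) * Real.cos x| + |Real.cos ((n : ℝ) * x) * Real.sin x| :=
          abs_add_le _ _
      _ ≤ |Real.sin ((n : ℝ) * x)| * 1 + 1 * |Real.sin x| := by
          rw [abs_mul, abs_mul]
          gcongr
          · exact Real.abs_cos_le_one x
          · exact Real.abs_cos_le_one _
      _ ≤ (n : ℝ) * |Real.sin x| + 1 * |Real.sin x| := by
          have := ih
          nlinarith [abs_nonneg (Real.sin x)]
      _ = ((n : ℝ) + 1) * |Real.sin x| := by ring

theorem tabooDensity_estimate :
    ∃ C : ℝ, 0 < C ∧ ∀ a > (0:ℝ), ∀ x ∈ Set.Ioo 0 a, ∀ y ∈ Set.Ioo 0 a, ∀ t > (0:ℝ),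
      |tabooDensity a t x y - (2 / a) * Real.sin (π * y / a) ^ 2|
        ≤ C * ((2 / a) * Real.sin (π * y / a) ^ 2) * Eseries (t / a ^ 2) := by
  refine ⟨1, one_pos, ?_⟩
  intro a ha x hx y hy t ht
  obtain ⟨hx0, hxa⟩ := hx
  obtain ⟨hy0, hya⟩ := hy
  have ha' : a ≠ 0 := ne_of_gt ha
  have hπ := Real.pi_pos
  set c : ℝ := π ^ 2 * t / (2 * a ^ 2) with hcdef
  have hc : 0 < c := by positivity
  set X : ℝ := π * x / a with hXdef
  set Y : ℝ := π * y / a with hYdef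
  have hX0 : 0 < X := by positivity
  have hXπ : X < π := by
    rw [hXdef, div_lt_iff₀ ha]
    nlinarith
  have hY0 : 0 < Y := by positivity
  have hYπ : Y < π := by
    rw [hYdef, div_lt_iff₀ ha]
    nlinarith
  have hsX : 0 < Real.sin X := Real.sin_pos_of_pos_of_lt_pi hX0 hXπ
  have hsY : 0 < Real.sin Y := Real.sin_pos_of_pos_of_lt_pi hY0 hYπ
  set G : ℕ → ℝ := fun n => Real.exp (-(((n : ℝ) + 1) ^ 2 - 1) * c) *
    Real.sin (((n : ℝ) + 1) * X) * Real.sin (((n : ℝ) + 1) * Y) with hGdef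
  have hr1 : Real.exp (-c) < 1 := Real.exp_lt_one_iff.mpr (by linarith)
  have hr0 : (0 : ℝ) < Real.exp (-c) := Real.exp_pos _
  -- summability of G
  have hGsum : Summable G := by
    apply Summable.of_norm_bounded
      (summable_geometric_of_lt_one hr0.le hr1)
    intro n
    rw [← Real.exp_nat_mul]
    have h1 : ‖G n‖ ≤ Real.exp (-(((n : ℝ) + 1) ^ 2 - 1) * c) := by
      simp only [hGdef, Real.norm_eq_abs, abs_mul, Real.abs_exp]
      have e := (Real.exp_pos (-(((n : ℝ) + 1) ^ 2 - 1) * c)).le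
      have hA : Real.exp (-(((n : ℝ) + 1) ^ 2 - 1) * c) * |Real.sin (((n : ℝ) + 1) * X)|
          ≤ Real.exp (-(((n : ℝ) + 1) ^ 2 - 1) * c) :=
        mul_le_of_le_one_right e (abs_sin_le_one _)
      have hB : Real.exp (-(((n : ℝ) + 1) ^ 2 - 1) * c) * |Real.sin (((n : ℝ) + 1) * X)|
            * |Real.sin (((n : ℝ) + 1) * Y)|
          ≤ Real.exp (-(((n : ℝ) + 1) ^ 2 - 1) * c) * |Real.sin (((n : ℝ) + 1) * X)| :=
        mul_le_of_le_one_right (by positivity) (abs_sin_le_one _)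
      linarith
    refine h1.trans (Real.exp_le_exp.mpr ?_)
    nlinarith [hc.le, (Nat.cast_nonneg n : (0:ℝ) ≤ n),
      mul_nonneg (by positivity : (0:ℝ) ≤ ((n:ℝ)^2 + n)) hc.le]
  -- rewrite tabooDensity
  have hkey : tabooDensity a t x y = (Real.sin Y / Real.sin X) * (2 / a) * (∑' n, G n) := by
    unfold tabooDensity killedDensity
    rw [show Real.exp (π ^ 2 * t / (2 * a ^ 2)) = Real.exp c from rfl]
    have : ∑' n : ℕ, G n = Real.exp c * ∑' n : ℕ,
        Real.exp (-π ^ 2 * ((n : ℝ) + 1) ^ 2 * t / (2 * a ^ 2)) *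
        Real.sin (π * ((n : ℝ) + 1) * x / a) * Real.sin (π * ((n : ℝ) + 1) * y / a) := by
      rw [← tsum_mul_left]
      apply tsum_congr
      intro n
      simp only [hGdef]
      have he : Real.exp c * Real.exp (-π ^ 2 * ((n : ℝ) + 1) ^ 2 * t / (2 * a ^ 2))
          = Real.exp (-(((n : ℝ) + 1) ^ 2 - 1) * c) := by
        rw [← Real.exp_add]
        congr 1
        rw [hcdef]
        field_simp
        ring
      have hx' : ((n : ℝ) + 1) * X = π * ((n : ℝ) + 1) * x / a := by rw [hXdef]; ring
      have hy' : ((n : ℝ) + 1) * Y = π * ((n : ℝ) + 1) * y / a := by rw [hYdef]; ring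
      rw [hx', hy', ← he]
      ring
    rw [this]
    ring
  -- split off the first term
  have hsplit : (∑' n, G n) = Real.sin X * Real.sin Y + ∑' n, G (n + 1) := by
    rw [Summable.tsum_eq_zero_add hGsum]
    congr 1
    simp only [hGdef]
    norm_num
  have hdiff : tabooDensity a t x y - (2 / a) * Real.sin Y ^ 2
      = Real.sin Y / Real.sin X * (2 / a) * (∑' n, G (n + 1)) := by
    rw [hkey, hsplit]
    field_simp
    ring
  -- the error series
  set E : ℕ → ℝ := fun n => ((n : ℝ) + 2) ^ 2 * Real.exp (-(((n : ℝ) + 2) ^ 2 - 1) * c)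
    with hEdef
  have hEeq : Eseries (t / a ^ 2) = ∑' n, E n := by
    unfold Eseries
    apply tsum_congr
    intro n
    rw [hEdef]
    congr 2
    rw [hcdef]
    field_simp
  have hEsum : Summable E := by
    have hnorm : ‖Real.exp (-c)‖ < 1 := by
      rw [Real.norm_eq_abs, abs_of_pos hr0]; exact hr1
    have h2 := summable_pow_mul_geometric_of_norm_lt_one 2 hnorm
    have h1 := summable_pow_mul_geometric_of_norm_lt_one 1 hnorm
    have h0 := summable_pow_mul_geometric_of_norm_lt_one 0 hnorm
    have hmaj : Summable (fun n : ℕ => ((n : ℝ) + 2) ^ 2 * Real.exp (-c) ^ n) := by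
      refine (h2.add ((h1.mul_left 4).add (h0.mul_left 4))).congr fun n => ?_
      ring
    refine Summable.of_nonneg_of_le (fun n => by positivity) (fun n => ?_) hmaj
    simp only [hEdef]
    rw [← Real.exp_nat_mul]
    refine mul_le_mul_of_nonneg_left (Real.exp_le_exp.mpr ?_) (by positivity)
    nlinarith [hc.le, (Nat.cast_nonneg n : (0:ℝ) ≤ n),
      mul_nonneg (by positivity : (0:ℝ) ≤ ((n:ℝ)^2 + 3*n + 3)) hc.le]
  -- termwise bound for the tail
  have hterm : ∀ n : ℕ, |G (n + 1)| ≤ Real.sin X * Real.sin Y * E n := by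
    intro n
    have hcast : ((n + 1 : ℕ) : ℝ) + 1 = (n : ℝ) + 2 := by push_cast; ring
    simp only [hGdef, hEdef, hcast]
    rw [abs_mul, abs_mul, Real.abs_exp]
    have hbX : |Real.sin (((n : ℝ) + 2) * X)| ≤ ((n : ℝ) + 2) * Real.sin X := by
      have := abs_sin_nmul (n + 2) X
      rw [abs_of_pos hsX] at this
      push_cast at this
      convert this using 3 <;> push_cast <;> ring
    have hbY : |Real.sin (((n : ℝ) + 2) * Y)| ≤ ((n : ℝ) + 2) * Real.sin Y := by
      have := abs_sin_nmul (n + 2) Y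
      rw [abs_of_pos hsY] at this
      push_cast at this
      convert this using 3 <;> push_cast <;> ring
    have hexp := Real.exp_pos (-(((n : ℝ) + 2) ^ 2 - 1) * c)
    have h1 : |Real.sin (((n : ℝ) + 2) * X)| * |Real.sin (((n : ℝ) + 2) * Y)|
        ≤ (((n : ℝ) + 2) * Real.sin X) * (((n : ℝ) + 2) * Real.sin Y) :=
      mul_le_mul hbX hbY (abs_nonneg _) (by positivity)
    calc Real.exp (-(((n : ℝ) + 2) ^ 2 - 1) * c) * |Real.sin (((n : ℝ) + 2) * X)|
          * |Real.sin (((n : ℝ) + 2) * Y)|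
        = Real.exp (-(((n : ℝ) + 2) ^ 2 - 1) * c)
            * (|Real.sin (((n : ℝ) + 2) * X)| * |Real.sin (((n : ℝ) + 2) * Y)|) := by ring
      _ ≤ Real.exp (-(((n : ℝ) + 2) ^ 2 - 1) * c)
            * ((((n : ℝ) + 2) * Real.sin X) * (((n : ℝ) + 2) * Real.sin Y)) :=
          mul_le_mul_of_nonneg_left h1 hexp.le
      _ = Real.sin X * Real.sin Y
            * (((n : ℝ) + 2) ^ 2 * Real.exp (-(((n : ℝ) + 2) ^ 2 - 1) * c)) := by ring
  have hGtailsum : Summable (fun n => G (n + 1)) := (summable_nat_add_iff 1).mpr hGsum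
  have hT : |∑' n, G (n + 1)| ≤ Real.sin X * Real.sin Y * ∑' n, E n := by
    have habs : Summable (fun n => ‖G (n + 1)‖) := hGtailsum.norm
    calc |∑' n, G (n + 1)| ≤ ∑' n, ‖G (n + 1)‖ := by
          rw [← Real.norm_eq_abs]; exact norm_tsum_le_tsum_norm habs
      _ ≤ ∑' n, Real.sin X * Real.sin Y * E n := by
          refine Summable.tsum_le_tsum (fun n => ?_) habs (hEsum.mul_left _)
          rw [Real.norm_eq_abs]; exact hterm n
      _ = Real.sin X * Real.sin Y * ∑' n, E n := tsum_mul_left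
  -- conclude
  rw [hdiff, hEeq]
  have hpre : (0:ℝ) ≤ Real.sin Y / Real.sin X * (2 / a) := by positivity
  calc |Real.sin Y / Real.sin X * (2 / a) * ∑' n, G (n + 1)|
      = Real.sin Y / Real.sin X * (2 / a) * |∑' n, G (n + 1)| := by
        rw [abs_mul, abs_of_nonneg hpre]
    _ ≤ Real.sin Y / Real.sin X * (2 / a) * (Real.sin X * Real.sin Y * ∑' n, E n) := by
        gcongr
    _ = 1 * (2 / a * Real.sin Y ^ 2) * ∑' n, E n := by
        field_simp
end

section
/- Let W ≥ 0 be a random variable with Laplace transform χ(λ) = E[e^{-λW}] satisfying χ''(λ) ~ 1/λ as λ → 0+. Then P(W > x) ~ 1/x as x → ∞. -/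
set_option maxHeartbeats 1000000
open Real MeasureTheory Filter Set

section
variable {Ω : Type*} [MeasurableSpace Ω] (μ : Measure Ω) [IsProbabilityMeasure μ]
  (W : Ω → ℝ) (hW : Measurable W) (hWpos : ∀ ω, 0 ≤ W ω)

lemma mul_exp_neg_le {c t : ℝ} (hc : 0 < c) (_ht : 0 ≤ t) : t * Real.exp (-(c*t)) ≤ 1/c := by
  have h1 : c * t ≤ Real.exp (c*t) := by
    have := Real.add_one_le_exp (c*t); linarith
  have h2 : 0 < Real.exp (c*t) := Real.exp_pos _
  rw [Real.exp_neg]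
  rw [mul_inv_le_iff₀ h2, one_div, inv_mul_eq_div, le_div_iff₀ hc]
  nlinarith

lemma sq_mul_exp_neg_le {c t : ℝ} (hc : 0 < c) (ht : 0 ≤ t) : t^2 * Real.exp (-(c*t)) ≤ 4/c^2 := by
  have h : t^2 * Real.exp (-(c*t)) = (t * Real.exp (-(c/2*t)))^2 := by
    rw [mul_pow]; congr 1; rw [sq, ← Real.exp_add]; ring_nf
  rw [h]
  have hb := mul_exp_neg_le (c := c/2) (t := t) (by linarith) ht
  have hnn : 0 ≤ t * Real.exp (-(c/2*t)) := by positivity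
  calc (t * Real.exp (-(c/2*t)))^2 ≤ (1/(c/2))^2 := pow_le_pow_left₀ hnn hb 2
  _ = 4/c^2 := by field_simp; ring

include hW hWpos in
lemma integrable_bdd {g : ℝ → ℝ} (hg : Measurable g) (C : ℝ) (hC : ∀ t, 0 ≤ t → |g t| ≤ C) :
    Integrable (fun ω => g (W ω)) μ := by
  apply Integrable.mono' (integrable_const C) ((hg.comp hW).aestronglyMeasurable)
  exact ae_of_all _ fun ω => by simpa using hC (W ω) (hWpos ω)

include hW hWpos in
lemma hasDerivAt_chi {x : ℝ} (hx : 0 < x) :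
    HasDerivAt (fun l : ℝ => ∫ ω, Real.exp (-l * W ω) ∂μ)
      (∫ ω, -(W ω * Real.exp (-x * W ω)) ∂μ) x := by
  have hball : ∀ l ∈ Metric.ball x (x/2), x/2 ≤ l := by
    intro l hl
    rw [Metric.mem_ball, Real.dist_eq, abs_lt] at hl
    linarith [hl.1]
  have h2 : Integrable (fun ω => Real.exp (-x * W ω)) μ := by
    apply integrable_bdd μ W hW hWpos (g := fun t => Real.exp (-x * t))
      (Real.measurable_exp.comp (measurable_const.mul measurable_id)) 1
    intro t ht
    rw [abs_of_pos (Real.exp_pos _)]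
    exact Real.exp_le_one_iff.mpr (by nlinarith)
  have hmes : ∀ l : ℝ, Measurable (fun t : ℝ => -(t * Real.exp (-l * t))) :=
    fun l => ((measurable_id.mul
      (Real.measurable_exp.comp (measurable_const.mul measurable_id)))).neg
  have h3 : AEStronglyMeasurable (fun ω => -(W ω * Real.exp (-x * W ω))) μ :=
    (((hmes x).comp hW)).aestronglyMeasurable
  have h4 : ∀ᵐ ω ∂μ, ∀ l ∈ Metric.ball x (x/2),
      ‖-(W ω * Real.exp (-l * W ω))‖ ≤ 2/x := by
    refine ae_of_all _ fun ω l hl => ?_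
    have hl2 := hball l hl
    have hWo := hWpos ω
    rw [norm_neg, Real.norm_eq_abs, abs_of_nonneg (by positivity)]
    have : W ω * Real.exp (-l * W ω) ≤ W ω * Real.exp (-(x/2 * W ω)) := by
      apply mul_le_mul_of_nonneg_left _ hWo
      apply Real.exp_le_exp.mpr; nlinarith
    calc W ω * Real.exp (-l * W ω) ≤ W ω * Real.exp (-(x/2 * W ω)) := this
    _ ≤ 1/(x/2) := mul_exp_neg_le (by linarith) hWo
    _ = 2/x := by field_simp
  have h6 : ∀ᵐ ω ∂μ, ∀ l ∈ Metric.ball x (x/2),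
      HasDerivAt (fun l' : ℝ => Real.exp (-l' * W ω)) (-(W ω * Real.exp (-l * W ω))) l := by
    refine ae_of_all _ fun ω l _ => ?_
    have hd : HasDerivAt (fun l' : ℝ => -l' * W ω) (-(W ω)) l := by
      simpa using ((hasDerivAt_id l).neg.mul_const (W ω))
    have := hd.exp
    convert this using 1
    ring
  have key := hasDerivAt_integral_of_dominated_loc_of_deriv_le (μ := μ)
    (F := fun l ω => Real.exp (-l * W ω)) (F' := fun l ω => -(W ω * Real.exp (-l * W ω)))
    (x₀ := x) (s := Metric.ball x (x/2)) (bound := fun _ => 2/x) (Metric.ball_mem_nhds _ (by linarith))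
    (Eventually.of_forall fun l => ((hW.const_mul (-l)).exp).aestronglyMeasurable)
    h2 h3 h4 (integrable_const _) h6
  exact key.2

include hW hWpos in
lemma hasDerivAt_chi' {x : ℝ} (hx : 0 < x) :
    HasDerivAt (fun l : ℝ => ∫ ω, -(W ω * Real.exp (-l * W ω)) ∂μ)
      (∫ ω, (W ω)^2 * Real.exp (-x * W ω) ∂μ) x := by
  have hball : ∀ l ∈ Metric.ball x (x/2), x/2 ≤ l := by
    intro l hl
    rw [Metric.mem_ball, Real.dist_eq, abs_lt] at hl
    linarith [hl.1]
  have hmes : ∀ l : ℝ, Measurable (fun t : ℝ => -(t * Real.exp (-l * t))) :=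
    fun l => ((measurable_id.mul
      (Real.measurable_exp.comp (measurable_const.mul measurable_id)))).neg
  have hmes2 : ∀ l : ℝ, Measurable (fun t : ℝ => t^2 * Real.exp (-l * t)) :=
    fun l => ((measurable_id.pow_const 2).mul
      (Real.measurable_exp.comp (measurable_const.mul measurable_id)))
  have h2 : Integrable (fun ω => -(W ω * Real.exp (-x * W ω))) μ := by
    apply integrable_bdd μ W hW hWpos (g := fun t => -(t * Real.exp (-x * t))) (hmes x) (1/x)
    intro t ht
    rw [abs_neg, abs_of_nonneg (by positivity)]
    have := mul_exp_neg_le hx ht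
    calc t * Real.exp (-x*t) = t * Real.exp (-(x*t)) := by ring_nf
    _ ≤ 1/x := this
  have h3 : AEStronglyMeasurable (fun ω => (W ω)^2 * Real.exp (-x * W ω)) μ :=
    ((hmes2 x).comp hW).aestronglyMeasurable
  have h4 : ∀ᵐ ω ∂μ, ∀ l ∈ Metric.ball x (x/2),
      ‖(W ω)^2 * Real.exp (-l * W ω)‖ ≤ 16/x^2 := by
    refine ae_of_all _ fun ω l hl => ?_
    have hl2 := hball l hl
    have hWo := hWpos ω
    rw [Real.norm_eq_abs, abs_of_nonneg (by positivity)]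
    have h5 : (W ω)^2 * Real.exp (-l * W ω) ≤ (W ω)^2 * Real.exp (-(x/2 * W ω)) := by
      apply mul_le_mul_of_nonneg_left _ (by positivity)
      apply Real.exp_le_exp.mpr; nlinarith
    calc (W ω)^2 * Real.exp (-l * W ω) ≤ (W ω)^2 * Real.exp (-(x/2 * W ω)) := h5
    _ ≤ 4/(x/2)^2 := sq_mul_exp_neg_le (by linarith) hWo
    _ = 16/x^2 := by field_simp; ring
  have h6 : ∀ᵐ ω ∂μ, ∀ l ∈ Metric.ball x (x/2),
      HasDerivAt (fun l' : ℝ => -(W ω * Real.exp (-l' * W ω)))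
        ((W ω)^2 * Real.exp (-l * W ω)) l := by
    refine ae_of_all _ fun ω l _ => ?_
    have hd : HasDerivAt (fun l' : ℝ => -l' * W ω) (-(W ω)) l := by
      simpa using ((hasDerivAt_id l).neg.mul_const (W ω))
    have := (hd.exp.const_mul (W ω)).neg
    exact this.congr_deriv (by ring)
  have key := hasDerivAt_integral_of_dominated_loc_of_deriv_le (μ := μ)
    (F := fun l ω => -(W ω * Real.exp (-l * W ω)))
    (F' := fun l ω => (W ω)^2 * Real.exp (-l * W ω))
    (x₀ := x) (s := Metric.ball x (x/2)) (bound := fun _ => 16/x^2) (Metric.ball_mem_nhds _ (by linarith))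
    (Eventually.of_forall fun l => ((hW.mul ((hW.const_mul (-l)).exp)).neg).aestronglyMeasurable)
    h2 h3 h4 (integrable_const _) h6
  exact key.2

include hW hWpos in
lemma deriv_deriv_chi {x : ℝ} (hx : 0 < x) :
    deriv (deriv (fun l : ℝ => ∫ ω, Real.exp (-l * W ω) ∂μ)) x
      = ∫ ω, (W ω)^2 * Real.exp (-x * W ω) ∂μ := by
  have hev : deriv (fun l : ℝ => ∫ ω, Real.exp (-l * W ω) ∂μ)
      =ᶠ[nhds x] (fun l : ℝ => ∫ ω, -(W ω * Real.exp (-l * W ω)) ∂μ) := by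
    filter_upwards [Ioi_mem_nhds hx] with l hl
    exact (hasDerivAt_chi μ W hW hWpos hl).deriv
  rw [hev.deriv_eq]
  exact (hasDerivAt_chi' μ W hW hWpos hx).deriv
end

section
variable {Ω : Type*} [MeasurableSpace Ω] (μ : Measure Ω) [IsProbabilityMeasure μ]
  (W : Ω → ℝ) (hW : Measurable W) (hWpos : ∀ ω, 0 ≤ W ω)

lemma scale_tendsto {c : ℝ} (hc : 0 < c) :
    Tendsto (fun lam : ℝ => c * lam) (nhdsWithin 0 (Set.Ioi 0)) (nhdsWithin 0 (Set.Ioi 0)) := by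
  rw [tendsto_nhdsWithin_iff]
  constructor
  · have h : Continuous (fun lam : ℝ => c * lam) := continuous_const.mul continuous_id
    have := h.tendsto (0:ℝ)
    rw [mul_zero] at this
    exact this.mono_left nhdsWithin_le_nhds
  · filter_upwards [self_mem_nhdsWithin] with lam hlam
    exact mul_pos hc hlam

include hW hWpos in
lemma mono_limit (hF : Tendsto (fun l : ℝ => l * ∫ ω, (W ω)^2 * Real.exp (-l * W ω) ∂μ)
      (nhdsWithin 0 (Set.Ioi 0)) (nhds 1)) (k : ℕ) :
    Tendsto (fun lam : ℝ => lam * ∫ ω, (W ω)^2 * Real.exp (-lam * W ω) ^ (k+1) ∂μ)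
      (nhdsWithin 0 (Set.Ioi 0)) (nhds (1/(k+1))) := by
  have hk : (0:ℝ) < (k:ℝ) + 1 := by positivity
  have hcomp := hF.comp (scale_tendsto (c := (k:ℝ)+1) hk)
  have := hcomp.const_mul (1/((k:ℝ)+1))
  rw [mul_one] at this
  apply this.congr
  intro lam
  simp only [Function.comp]
  have hint : (fun ω => (W ω)^2 * Real.exp (-(((k:ℝ)+1) * lam) * W ω))
      = fun ω => (W ω)^2 * Real.exp (-lam * W ω) ^ (k+1) := by
    funext ω
    rw [← Real.exp_nat_mul]
    push_cast
    ring_nf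
  rw [hint]
  have hne : ((k:ℝ)+1) ≠ 0 := hk.ne'
  field_simp
end

section
variable {Ω : Type*} [MeasurableSpace Ω] (μ : Measure Ω) [IsProbabilityMeasure μ]
  (W : Ω → ℝ) (hW : Measurable W) (hWpos : ∀ ω, 0 ≤ W ω)

include hW hWpos in
lemma integrable_sq_exp_pow {lam : ℝ} (hlam : 0 < lam) (k : ℕ) :
    Integrable (fun ω => (W ω)^2 * Real.exp (-lam * W ω) ^ (k+1)) μ := by
  have hmes : Measurable (fun t : ℝ => t^2 * Real.exp (-lam * t) ^ (k+1)) :=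
    (measurable_id.pow_const 2).mul (((measurable_id.const_mul (-lam)).exp).pow_const (k+1))
  apply Integrable.mono' (integrable_const (4/lam^2))
    ((hmes.comp hW).aestronglyMeasurable)
  refine ae_of_all _ fun ω => ?_
  have ht := hWpos ω
  set t := W ω with htdef
  have he : (0:ℝ) < Real.exp (-lam * t) := Real.exp_pos _
  have he1 : Real.exp (-lam * t) ≤ 1 := Real.exp_le_one_iff.mpr (by nlinarith)
  have hpow : Real.exp (-lam * t) ^ (k+1) ≤ Real.exp (-lam * t) := by
    calc Real.exp (-lam * t) ^ (k+1) ≤ Real.exp (-lam * t) ^ 1 :=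
          pow_le_pow_of_le_one he.le he1 (by omega)
    _ = Real.exp (-lam * t) := pow_one _
  simp only [Function.comp_apply]
  rw [Real.norm_eq_abs, abs_of_nonneg (by positivity)]
  have h2 : t^2 * Real.exp (-lam * t) ^ (k+1) ≤ t^2 * Real.exp (-lam * t) :=
    mul_le_mul_of_nonneg_left hpow (by positivity)
  have h3 : t^2 * Real.exp (-lam * t) ≤ 4/lam^2 := by
    have := sq_mul_exp_neg_le hlam ht
    calc t^2 * Real.exp (-lam * t) = t^2 * Real.exp (-(lam * t)) := by ring_nf
    _ ≤ 4/lam^2 := this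
  linarith

include hW hWpos in
lemma poly_limit (hF : Tendsto (fun l : ℝ => l * ∫ ω, (W ω)^2 * Real.exp (-l * W ω) ∂μ)
      (nhdsWithin 0 (Set.Ioi 0)) (nhds 1)) (p : Polynomial ℝ) :
    Tendsto (fun lam : ℝ => lam * ∫ ω, (W ω)^2 *
        (Real.exp (-lam * W ω) * p.eval (Real.exp (-lam * W ω))) ∂μ)
      (nhdsWithin 0 (Set.Ioi 0)) (nhds (∫ y in (0:ℝ)..1, p.eval y)) := by
  set d := p.natDegree + 1 with hd
  -- RHS value
  have hrhs : (∫ y in (0:ℝ)..1, p.eval y)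
      = ∑ i ∈ Finset.range d, p.coeff i * (1/(i+1)) := by
    have : ∀ y : ℝ, p.eval y = ∑ i ∈ Finset.range d, p.coeff i * y ^ i := fun y =>
      Polynomial.eval_eq_sum_range (p := p) y
    rw [intervalIntegral.integral_congr (g := fun y => ∑ i ∈ Finset.range d, p.coeff i * y ^ i)
      (fun y _ => this y)]
    rw [intervalIntegral.integral_finset_sum]
    · congr 1
      funext i
      rw [intervalIntegral.integral_const_mul, integral_pow]
      norm_num
    · intro i _
      exact (continuous_const.mul (continuous_pow i)).intervalIntegrable _ _
  rw [hrhs]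
  -- LHS
  have key : ∀ᶠ lam in nhdsWithin (0:ℝ) (Set.Ioi 0),
      lam * (∫ ω, (W ω)^2 *
        (Real.exp (-lam * W ω) * p.eval (Real.exp (-lam * W ω))) ∂μ)
      = ∑ i ∈ Finset.range d, p.coeff i *
          (lam * ∫ ω, (W ω)^2 * Real.exp (-lam * W ω) ^ (i+1) ∂μ) := by
    filter_upwards [self_mem_nhdsWithin] with lam hlam
    have hlam' : (0:ℝ) < lam := hlam
    have hth : (fun ω => (W ω)^2 *
        (Real.exp (-lam * W ω) * p.eval (Real.exp (-lam * W ω))))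
        = fun ω => ∑ i ∈ Finset.range d, p.coeff i *
            ((W ω)^2 * Real.exp (-lam * W ω) ^ (i+1)) := by
      funext ω
      rw [Polynomial.eval_eq_sum_range (p := p) (Real.exp (-lam * W ω)), Finset.mul_sum,
        Finset.mul_sum]
      congr 1
      funext i
      rw [pow_succ]
      ring
    rw [hth, integral_finset_sum _ (fun i _ =>
      (integrable_sq_exp_pow μ W hW hWpos hlam' i).const_mul _), Finset.mul_sum]
    congr 1
    funext i
    rw [MeasureTheory.integral_const_mul]
    ring
  apply Tendsto.congr' (key.mono fun lam h => h.symm)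
  exact tendsto_finset_sum _ fun i _ =>
    ((mono_limit μ W hW hWpos hF i).const_mul (p.coeff i))
end



noncomputable def pLow (η y : ℝ) : ℝ :=
  (max y (Real.exp (-1)))⁻¹ * min 1 (max 0 ((y - Real.exp (-1))/η))

noncomputable def pHigh (η y : ℝ) : ℝ :=
  (max y (Real.exp (-1)))⁻¹ * min 1 (max 0 ((y - (Real.exp (-1) - η))/η))

lemma c_pos : (0:ℝ) < Real.exp (-1) := Real.exp_pos _
lemma c_lt_one : Real.exp (-1) < 1 := by
  rw [Real.exp_lt_one_iff]; norm_num

lemma max_c_pos (y : ℝ) : 0 < max y (Real.exp (-1)) := lt_of_lt_of_le c_pos (le_max_right _ _)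

lemma pLow_cont {η : ℝ} (hη : 0 < η) : Continuous (pLow η) := by
  apply Continuous.mul
  · exact (continuous_id.max continuous_const).inv₀ (fun y => (max_c_pos y).ne')
  · exact continuous_const.min (continuous_const.max ((continuous_id.sub continuous_const).div_const η))

lemma pHigh_cont {η : ℝ} (hη : 0 < η) : Continuous (pHigh η) := by
  apply Continuous.mul
  · exact (continuous_id.max continuous_const).inv₀ (fun y => (max_c_pos y).ne')
  · exact continuous_const.min (continuous_const.max ((continuous_id.sub continuous_const).div_const η))

lemma pLow_nonneg {η : ℝ} (hη : 0 < η) (y : ℝ) : 0 ≤ pLow η y := by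
  unfold pLow
  apply mul_nonneg (inv_nonneg.mpr (max_c_pos y).le)
  exact le_min (by norm_num) (le_max_left _ _)

lemma pHigh_nonneg {η : ℝ} (hη : 0 < η) (y : ℝ) : 0 ≤ pHigh η y := by
  unfold pHigh
  apply mul_nonneg (inv_nonneg.mpr (max_c_pos y).le)
  exact le_min (by norm_num) (le_max_left _ _)

lemma pHigh_le {η : ℝ} (hη : 0 < η) (y : ℝ) : pHigh η y ≤ Real.exp 1 := by
  unfold pHigh
  have h1 : (max y (Real.exp (-1)))⁻¹ ≤ Real.exp 1 := by
    have : (Real.exp (-1))⁻¹ = Real.exp 1 := by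
      rw [← Real.exp_neg]; norm_num
    rw [← this]
    exact inv_anti₀ c_pos (le_max_right _ _)
  have h2 : min 1 (max 0 ((y - (Real.exp (-1) - η))/η)) ≤ 1 := min_le_left _ _
  calc (max y (Real.exp (-1)))⁻¹ * min 1 (max 0 ((y - (Real.exp (-1) - η))/η))
      ≤ (max y (Real.exp (-1)))⁻¹ * 1 :=
        mul_le_mul_of_nonneg_left h2 (inv_nonneg.mpr (max_c_pos y).le)
  _ = (max y (Real.exp (-1)))⁻¹ := mul_one _
  _ ≤ Real.exp 1 := h1

-- sandwich property
lemma pLow_sandwich {η : ℝ} (hη : 0 < η) {y : ℝ} (hy : y ∈ Set.Ioc (0:ℝ) 1) :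
    y * pLow η y ≤ (if Real.exp (-1) ≤ y then (1:ℝ) else 0) := by
  rcases le_or_gt (Real.exp (-1)) y with h | h
  · rw [if_pos h]
    unfold pLow
    have hmax : max y (Real.exp (-1)) = y := max_eq_left h
    rw [hmax]
    have : min 1 (max 0 ((y - Real.exp (-1))/η)) ≤ 1 := min_le_left _ _
    calc y * (y⁻¹ * min 1 (max 0 ((y - Real.exp (-1))/η)))
        = min 1 (max 0 ((y - Real.exp (-1))/η)) := by
          rw [← mul_assoc, mul_inv_cancel₀ (by linarith [c_pos] : y ≠ 0), one_mul]
    _ ≤ 1 := this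
  · rw [if_neg (not_le.mpr h)]
    unfold pLow
    have hramp : max 0 ((y - Real.exp (-1))/η) = 0 := by
      apply max_eq_left
      apply div_nonpos_of_nonpos_of_nonneg (by linarith) hη.le
    have : min 1 (max 0 ((y - Real.exp (-1))/η)) = 0 := by
      rw [hramp]; norm_num
    rw [this, mul_zero, mul_zero]

lemma pHigh_sandwich {η : ℝ} (hη : 0 < η) {y : ℝ} (hy : y ∈ Set.Ioc (0:ℝ) 1) :
    (if Real.exp (-1) ≤ y then (1:ℝ) else 0) ≤ y * pHigh η y := by
  rcases le_or_gt (Real.exp (-1)) y with h | h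
  · rw [if_pos h]
    unfold pHigh
    have hmax : max y (Real.exp (-1)) = y := max_eq_left h
    have hramp : min 1 (max 0 ((y - (Real.exp (-1) - η))/η)) = 1 := by
      apply min_eq_left
      apply le_max_of_le_right
      rw [le_div_iff₀ hη]
      linarith
    rw [hmax, hramp, mul_one, mul_inv_cancel₀ (by linarith [c_pos] : y ≠ 0)]
  · rw [if_neg (not_le.mpr h)]
    exact mul_nonneg hy.1.le (pHigh_nonneg hη y)

lemma pHigh_eq_inv {η y : ℝ} (hη : 0 < η) (hy : Real.exp (-1) ≤ y) : pHigh η y = y⁻¹ := by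
  unfold pHigh
  rw [max_eq_left hy]
  have hramp : min 1 (max 0 ((y - (Real.exp (-1) - η))/η)) = 1 := by
    apply min_eq_left
    apply le_max_of_le_right
    rw [le_div_iff₀ hη]
    linarith
  rw [hramp, mul_one]

lemma pLow_eq_inv {η y : ℝ} (hη : 0 < η) (hy : Real.exp (-1) + η ≤ y) : pLow η y = y⁻¹ := by
  unfold pLow
  rw [max_eq_left (by linarith)]
  have hramp : min 1 (max 0 ((y - Real.exp (-1))/η)) = 1 := by
    apply min_eq_left
    apply le_max_of_le_right
    rw [le_div_iff₀ hη]
    linarith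
  rw [hramp, mul_one]

lemma pHigh_eq_zero {η y : ℝ} (hη : 0 < η) (hy : y ≤ Real.exp (-1) - η) : pHigh η y = 0 := by
  unfold pHigh
  have hramp : max 0 ((y - (Real.exp (-1) - η))/η) = 0 :=
    max_eq_left (div_nonpos_of_nonpos_of_nonneg (by linarith) hη.le)
  rw [hramp]
  norm_num

lemma pHigh_integral {η : ℝ} (hη : 0 < η) (hη2 : η ≤ Real.exp (-1) / 2) :
    ∫ y in (0:ℝ)..1, pHigh η y ≤ 1 + Real.exp 1 * η := by
  set c := Real.exp (-1) with hc
  have hc0 : 0 < c := c_pos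
  have hc1 : c < 1 := c_lt_one
  have h1 : (0:ℝ) ≤ c - η := by simp only [hc] at hη2 ⊢; linarith
  have h2 : c - η ≤ c := by linarith
  have hii : ∀ a b : ℝ, IntervalIntegrable (pHigh η) volume a b :=
    fun a b => (pHigh_cont hη).intervalIntegrable a b
  have hsplit : ∫ y in (0:ℝ)..1, pHigh η y
      = (∫ y in (0:ℝ)..(c-η), pHigh η y) + (∫ y in (c-η)..c, pHigh η y)
        + (∫ y in c..1, pHigh η y) := by
    rw [intervalIntegral.integral_add_adjacent_intervals (hii _ _) (hii _ _),
      intervalIntegral.integral_add_adjacent_intervals (hii _ _) (hii _ _)]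
  have e1 : (∫ y in (0:ℝ)..(c-η), pHigh η y) = 0 := by
    rw [intervalIntegral.integral_congr (g := fun _ => (0:ℝ)), intervalIntegral.integral_zero]
    intro y hy
    rw [Set.uIcc_of_le h1] at hy
    exact pHigh_eq_zero hη hy.2
  have e2 : (∫ y in (c-η)..c, pHigh η y) ≤ Real.exp 1 * η := by
    have := intervalIntegral.integral_mono_on (a := c-η) (b := c) h2 (hii _ _)
      (intervalIntegrable_const (c := Real.exp 1)) (fun y _ => pHigh_le hη y)
    calc (∫ y in (c-η)..c, pHigh η y) ≤ ∫ _ in (c-η)..c, Real.exp 1 := this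
    _ = Real.exp 1 * η := by
      rw [intervalIntegral.integral_const]
      simp [smul_eq_mul]
      ring
  have e3 : (∫ y in c..1, pHigh η y) = 1 := by
    rw [intervalIntegral.integral_congr (g := fun y => y⁻¹)]
    · rw [integral_inv_of_pos hc0 one_pos, one_div, Real.log_inv, hc, Real.log_exp]
      norm_num
    · intro y hy
      rw [Set.uIcc_of_le hc1.le] at hy
      exact pHigh_eq_inv hη hy.1
  rw [hsplit, e1, e3]
  linarith [e2]

lemma c_lt_half : Real.exp (-1) < 1/2 := by
  have h2 : (2:ℝ) < Real.exp 1 := by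
    have := Real.exp_one_gt_d9
    linarith
  rw [Real.exp_neg]
  rw [inv_lt_comm₀ (Real.exp_pos 1) (by norm_num)] at *
  · linarith
lemma pLow_integral {η : ℝ} (hη : 0 < η) (hη2 : η ≤ Real.exp (-1) / 2) :
    1 - Real.exp 1 * η ≤ ∫ y in (0:ℝ)..1, pLow η y := by
  set c := Real.exp (-1) with hc
  have hc0 : 0 < c := c_pos
  have hchalf : c < 1/2 := c_lt_half
  have hcη : c + η < 1 := by linarith
  have hii : ∀ a b : ℝ, IntervalIntegrable (pLow η) volume a b :=
    fun a b => (pLow_cont hη).intervalIntegrable a b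
  have hsplit : ∫ y in (0:ℝ)..1, pLow η y
      = (∫ y in (0:ℝ)..(c+η), pLow η y) + (∫ y in (c+η)..1, pLow η y) := by
    rw [intervalIntegral.integral_add_adjacent_intervals (hii _ _) (hii _ _)]
  have e1 : (0:ℝ) ≤ ∫ y in (0:ℝ)..(c+η), pLow η y :=
    intervalIntegral.integral_nonneg (by linarith) (fun y _ => pLow_nonneg hη y)
  have e2 : (∫ y in (c+η)..1, pLow η y) = - Real.log (c+η) := by
    rw [intervalIntegral.integral_congr (g := fun y => y⁻¹)]
    · rw [integral_inv_of_pos (by linarith) one_pos, one_div, Real.log_inv]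
    · intro y hy
      rw [Set.uIcc_of_le hcη.le] at hy
      exact pLow_eq_inv hη hy.1
  have e3 : Real.log (c+η) ≤ -1 + Real.exp 1 * η := by
    have hfac : c + η = c * (1 + Real.exp 1 * η) := by
      have : c * Real.exp 1 = 1 := by
        rw [hc, ← Real.exp_add]; norm_num
      ring_nf
      nlinarith [this]
    rw [hfac, Real.log_mul hc0.ne' (by positivity), hc, Real.log_exp]
    have := Real.log_le_sub_one_of_pos (x := 1 + Real.exp 1 * η) (by positivity)
    linarith
  rw [hsplit, e2]
  linarith

lemma exists_poly_pair {ε : ℝ} (hε : 0 < ε) :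
    ∃ q₁ q₂ : Polynomial ℝ,
      (∀ y ∈ Set.Ioc (0:ℝ) 1, y * q₁.eval y ≤ (if Real.exp (-1) ≤ y then (1:ℝ) else 0)) ∧
      (∀ y ∈ Set.Ioc (0:ℝ) 1, (if Real.exp (-1) ≤ y then (1:ℝ) else 0) ≤ y * q₂.eval y) ∧
      1 - ε ≤ (∫ y in (0:ℝ)..1, q₁.eval y) ∧ (∫ y in (0:ℝ)..1, q₂.eval y) ≤ 1 + ε := by
  set η := min (ε/(4*Real.exp 1)) (Real.exp (-1)/2) with hηdef
  have hη : 0 < η := lt_min (by positivity) (by positivity)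
  have hη2 : η ≤ Real.exp (-1)/2 := min_le_right _ _
  have hηε : Real.exp 1 * η ≤ ε/4 := by
    have h1 : η ≤ ε/(4*Real.exp 1) := min_le_left _ _
    have he : (0:ℝ) < Real.exp 1 := Real.exp_pos _
    rw [← le_div_iff₀' he]
    calc η ≤ ε/(4*Real.exp 1) := h1
    _ = ε/4/Real.exp 1 := by ring
  set δ := ε/4 with hδdef
  have hδ : 0 < δ := by positivity
  obtain ⟨r₁, hr₁⟩ := exists_polynomial_near_of_continuousOn 0 1 (pLow η)
    (pLow_cont hη).continuousOn δ hδ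
  obtain ⟨r₂, hr₂⟩ := exists_polynomial_near_of_continuousOn 0 1 (pHigh η)
    (pHigh_cont hη).continuousOn δ hδ
  refine ⟨r₁ - Polynomial.C δ, r₂ + Polynomial.C δ, ?_, ?_, ?_, ?_⟩
  · intro y hy
    have hIcc : y ∈ Set.Icc (0:ℝ) 1 := ⟨hy.1.le, hy.2⟩
    have h := hr₁ y hIcc
    have h1 : (r₁ - Polynomial.C δ).eval y ≤ pLow η y := by
      simp only [Polynomial.eval_sub, Polynomial.eval_C]
      rw [abs_lt] at h
      linarith [h.1]
    calc y * (r₁ - Polynomial.C δ).eval y ≤ y * pLow η y :=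
          mul_le_mul_of_nonneg_left h1 hy.1.le
    _ ≤ _ := pLow_sandwich hη hy
  · intro y hy
    have hIcc : y ∈ Set.Icc (0:ℝ) 1 := ⟨hy.1.le, hy.2⟩
    have h := hr₂ y hIcc
    have h1 : pHigh η y ≤ (r₂ + Polynomial.C δ).eval y := by
      simp only [Polynomial.eval_add, Polynomial.eval_C]
      rw [abs_lt] at h
      linarith [h.1]
    calc (if Real.exp (-1) ≤ y then (1:ℝ) else 0) ≤ y * pHigh η y := pHigh_sandwich hη hy
    _ ≤ y * (r₂ + Polynomial.C δ).eval y := mul_le_mul_of_nonneg_left h1 hy.1.le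
  · have hmono : (∫ y in (0:ℝ)..1, (pLow η y - 2*δ)) ≤
        ∫ y in (0:ℝ)..1, (r₁ - Polynomial.C δ).eval y := by
      apply intervalIntegral.integral_mono_on zero_le_one
        (((pLow_cont hη).sub continuous_const).intervalIntegrable _ _)
        ((r₁ - Polynomial.C δ).continuous.intervalIntegrable _ _)
      intro y hy
      have h := hr₁ y hy
      simp only [Polynomial.eval_sub, Polynomial.eval_C, Pi.sub_apply]
      rw [abs_lt] at h
      linarith [h.2]
    have hval : (∫ y in (0:ℝ)..1, (pLow η y - 2*δ))
        = (∫ y in (0:ℝ)..1, pLow η y) - 2*δ := by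
      rw [intervalIntegral.integral_sub ((pLow_cont hη).intervalIntegrable _ _)
        (intervalIntegrable_const)]
      simp
    have := pLow_integral hη hη2
    rw [hval] at hmono
    have hδε : 2*δ = ε/2 := by rw [hδdef]; ring
    linarith
  · have hmono : (∫ y in (0:ℝ)..1, (r₂ + Polynomial.C δ).eval y) ≤
        ∫ y in (0:ℝ)..1, (pHigh η y + 2*δ) := by
      apply intervalIntegral.integral_mono_on zero_le_one
        ((r₂ + Polynomial.C δ).continuous.intervalIntegrable _ _)
        (((pHigh_cont hη).add continuous_const).intervalIntegrable _ _)
      intro y hy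
      have h := hr₂ y hy
      simp only [Polynomial.eval_add, Polynomial.eval_C, Pi.add_apply]
      rw [abs_lt] at h
      linarith [h.2]
    have hval : (∫ y in (0:ℝ)..1, (pHigh η y + 2*δ))
        = (∫ y in (0:ℝ)..1, pHigh η y) + 2*δ := by
      rw [intervalIntegral.integral_add ((pHigh_cont hη).intervalIntegrable _ _)
        (intervalIntegrable_const)]
      simp
    have := pHigh_integral hη hη2
    rw [hval] at hmono
    have hδε : 2*δ = ε/2 := by rw [hδdef]; ring
    linarith

section
variable {Ω : Type*} [MeasurableSpace Ω] (μ : Measure Ω) [IsProbabilityMeasure μ]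
  (W : Ω → ℝ) (hW : Measurable W) (hWpos : ∀ ω, 0 ≤ W ω)

include hW hWpos in
lemma integrable_trunc (x : ℝ) :
    Integrable (fun ω => if W ω ≤ x then (W ω)^2 else 0) μ := by
  have hg : Measurable (fun t : ℝ => if t ≤ x then t^2 else 0) :=
    Measurable.ite (measurableSet_le measurable_id measurable_const)
      (measurable_id.pow_const 2) measurable_const
  apply integrable_bdd μ W hW hWpos hg (x^2)
  intro t ht
  by_cases h : t ≤ x
  · rw [if_pos h, abs_of_nonneg (by positivity)]
    have hx : 0 ≤ x := le_trans ht h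
    nlinarith
  · rw [if_neg h]
    simp [sq_nonneg x]

include hW hWpos in
lemma integrable_sq_exp_eval {lam : ℝ} (hlam : 0 < lam) (q : Polynomial ℝ) :
    Integrable (fun ω => (W ω)^2 *
      (Real.exp (-lam * W ω) * q.eval (Real.exp (-lam * W ω)))) μ := by
  obtain ⟨M, hM⟩ := (isCompact_Icc (a := (0:ℝ)) (b := 1)).exists_bound_of_continuousOn
    q.continuous.continuousOn
  have hg : Measurable (fun t : ℝ => t^2 * (Real.exp (-lam * t) * q.eval (Real.exp (-lam * t)))) := by
    have he : Measurable (fun t : ℝ => Real.exp (-lam * t)) := (measurable_id.const_mul (-lam)).exp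
    exact (measurable_id.pow_const 2).mul (he.mul (q.continuous.measurable.comp he))
  apply integrable_bdd μ W hW hWpos hg (4/lam^2 * M)
  intro t ht
  have hy : Real.exp (-lam * t) ∈ Set.Icc (0:ℝ) 1 :=
    ⟨(Real.exp_pos _).le, Real.exp_le_one_iff.mpr (by nlinarith)⟩
  have hqb : |q.eval (Real.exp (-lam * t))| ≤ M := by
    have := hM _ hy
    simpa using this
  have hM0 : 0 ≤ M := le_trans (abs_nonneg _) hqb
  have hte : 0 ≤ t^2 * Real.exp (-lam * t) := by positivity
  have hsq : t^2 * Real.exp (-lam * t) ≤ 4/lam^2 := by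
    have := sq_mul_exp_neg_le hlam ht
    calc t^2 * Real.exp (-lam * t) = t^2 * Real.exp (-(lam * t)) := by ring_nf
    _ ≤ 4/lam^2 := this
  calc |t^2 * (Real.exp (-lam * t) * q.eval (Real.exp (-lam * t)))|
      = t^2 * Real.exp (-lam * t) * |q.eval (Real.exp (-lam * t))| := by
        rw [abs_mul, abs_mul, abs_of_nonneg (sq_nonneg t), abs_of_pos (Real.exp_pos _), mul_assoc]
  _ ≤ (4/lam^2) * M := by
      apply mul_le_mul hsq hqb (abs_nonneg _) (by positivity)

lemma cond_iff' {lam t : ℝ} (hlam : 0 < lam) :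
    (t ≤ 1/lam ↔ Real.exp (-1) ≤ Real.exp (-lam * t)) := by
  rw [Real.exp_le_exp]
  constructor
  · intro h
    have := (le_div_iff₀ hlam).mp h
    nlinarith
  · intro h
    rw [le_div_iff₀ hlam]
    nlinarith

include hW hWpos in
lemma sandwich_low {lam : ℝ} (hlam : 0 < lam) (q : Polynomial ℝ)
    (hq : ∀ y ∈ Set.Ioc (0:ℝ) 1, y * q.eval y ≤ (if Real.exp (-1) ≤ y then (1:ℝ) else 0)) :
    (∫ ω, (W ω)^2 * (Real.exp (-lam * W ω) * q.eval (Real.exp (-lam * W ω))) ∂μ)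
      ≤ ∫ ω, (if W ω ≤ 1/lam then (W ω)^2 else 0) ∂μ := by
  apply integral_mono (integrable_sq_exp_eval μ W hW hWpos hlam q)
    (integrable_trunc μ W hW hWpos (1/lam))
  intro ω
  dsimp only
  have hWo := hWpos ω
  set y := Real.exp (-lam * W ω) with hy
  have hyIoc : y ∈ Set.Ioc (0:ℝ) 1 :=
    ⟨Real.exp_pos _, Real.exp_le_one_iff.mpr (by nlinarith)⟩
  have h := hq y hyIoc
  have hiff := cond_iff' (t := W ω) hlam
  by_cases hc : W ω ≤ 1/lam
  · rw [if_pos hc]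
    rw [if_pos (hiff.mp hc)] at h
    calc (W ω)^2 * (y * q.eval y) ≤ (W ω)^2 * 1 :=
          mul_le_mul_of_nonneg_left h (by positivity)
    _ = (W ω)^2 := mul_one _
  · rw [if_neg hc]
    rw [if_neg (fun hcc => hc (hiff.mpr hcc))] at h
    calc (W ω)^2 * (y * q.eval y) ≤ (W ω)^2 * 0 :=
          mul_le_mul_of_nonneg_left h (by positivity)
    _ = 0 := mul_zero _

include hW hWpos in
lemma sandwich_high {lam : ℝ} (hlam : 0 < lam) (q : Polynomial ℝ)
    (hq : ∀ y ∈ Set.Ioc (0:ℝ) 1, (if Real.exp (-1) ≤ y then (1:ℝ) else 0) ≤ y * q.eval y) :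
    (∫ ω, (if W ω ≤ 1/lam then (W ω)^2 else 0) ∂μ)
      ≤ ∫ ω, (W ω)^2 * (Real.exp (-lam * W ω) * q.eval (Real.exp (-lam * W ω))) ∂μ := by
  apply integral_mono (integrable_trunc μ W hW hWpos (1/lam))
    (integrable_sq_exp_eval μ W hW hWpos hlam q)
  intro ω
  dsimp only
  have hWo := hWpos ω
  set y := Real.exp (-lam * W ω) with hy
  have hyIoc : y ∈ Set.Ioc (0:ℝ) 1 :=
    ⟨Real.exp_pos _, Real.exp_le_one_iff.mpr (by nlinarith)⟩
  have h := hq y hyIoc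
  have hiff := cond_iff' (t := W ω) hlam
  by_cases hc : W ω ≤ 1/lam
  · rw [if_pos hc]
    rw [if_pos (hiff.mp hc)] at h
    calc (W ω)^2 = (W ω)^2 * 1 := (mul_one _).symm
    _ ≤ (W ω)^2 * (y * q.eval y) := mul_le_mul_of_nonneg_left h (by positivity)
  · rw [if_neg hc]
    rw [if_neg (fun hcc => hc (hiff.mpr hcc))] at h
    exact mul_nonneg (by positivity) (le_trans (le_refl 0) h)

include hW hWpos in
lemma trunc_tendsto (hF : Tendsto (fun l : ℝ => l * ∫ ω, (W ω)^2 * Real.exp (-l * W ω) ∂μ)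
      (nhdsWithin 0 (Set.Ioi 0)) (nhds 1)) :
    Tendsto (fun lam : ℝ => lam * ∫ ω, (if W ω ≤ 1/lam then (W ω)^2 else 0) ∂μ)
      (nhdsWithin 0 (Set.Ioi 0)) (nhds 1) := by
  rw [Metric.tendsto_nhds]
  intro ε hε
  obtain ⟨q₁, q₂, hq₁, hq₂, hint₁, hint₂⟩ := exists_poly_pair (ε := ε/2) (by positivity)
  have h₁ := poly_limit μ W hW hWpos hF q₁
  have h₂ := poly_limit μ W hW hWpos hF q₂
  rw [Metric.tendsto_nhds] at h₁ h₂
  filter_upwards [h₁ (ε/2) (by positivity), h₂ (ε/2) (by positivity),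
    self_mem_nhdsWithin] with lam hd₁ hd₂ hlam
  have hlam' : (0:ℝ) < lam := hlam
  rw [Real.dist_eq, abs_lt] at hd₁ hd₂ ⊢
  have hs₁ := sandwich_low μ W hW hWpos hlam' q₁ hq₁
  have hs₂ := sandwich_high μ W hW hWpos hlam' q₂ hq₂
  have hm₁ := mul_le_mul_of_nonneg_left hs₁ hlam'.le
  have hm₂ := mul_le_mul_of_nonneg_left hs₂ hlam'.le
  constructor
  · linarith [hd₁.1]
  · linarith [hd₂.2]
end

section
variable {Ω : Type*} [MeasurableSpace Ω] (μ : Measure Ω) [IsProbabilityMeasure μ]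
  (W : Ω → ℝ) (hW : Measurable W) (hWpos : ∀ ω, 0 ≤ W ω)

include hW in
lemma block_measurable (a b : ℝ) : MeasurableSet {ω | a < W ω ∧ W ω ≤ b} := by
  have : {ω | a < W ω ∧ W ω ≤ b} = W ⁻¹' (Set.Ioc a b) := rfl
  rw [this]
  exact hW measurableSet_Ioc

include hW in
lemma tail_measurable (a : ℝ) : MeasurableSet {ω | a < W ω} := by
  have : {ω | a < W ω} = W ⁻¹' (Set.Ioi a) := rfl
  rw [this]
  exact hW measurableSet_Ioi

include hW hWpos in
lemma block_bound {a b : ℝ} (ha : 0 < a) (hab : a ≤ b) :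
    a^2 * (μ {ω | a < W ω ∧ W ω ≤ b}).toReal
      ≤ (∫ ω, (if W ω ≤ b then (W ω)^2 else 0) ∂μ)
        - (∫ ω, (if W ω ≤ a then (W ω)^2 else 0) ∂μ)
    ∧ (∫ ω, (if W ω ≤ b then (W ω)^2 else 0) ∂μ)
        - (∫ ω, (if W ω ≤ a then (W ω)^2 else 0) ∂μ)
      ≤ b^2 * (μ {ω | a < W ω ∧ W ω ≤ b}).toReal := by
  have hset := block_measurable W hW a b
  have hdiff : (∫ ω, (if W ω ≤ b then (W ω)^2 else 0) ∂μ)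
      - (∫ ω, (if W ω ≤ a then (W ω)^2 else 0) ∂μ)
      = ∫ ω, (if a < W ω ∧ W ω ≤ b then (W ω)^2 else 0) ∂μ := by
    rw [← integral_sub (integrable_trunc μ W hW hWpos b) (integrable_trunc μ W hW hWpos a)]
    congr 1
    funext ω
    by_cases h1 : W ω ≤ a
    · rw [if_pos (le_trans h1 hab), if_pos h1, if_neg (fun hc => absurd h1 (not_le.mpr hc.1))]
      ring
    · by_cases h2 : W ω ≤ b
      · rw [if_pos h2, if_neg h1, if_pos ⟨not_le.mp h1, h2⟩]
        ring
      · rw [if_neg h2, if_neg h1, if_neg (fun hc => h2 hc.2)]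
        ring
  have hindint : Integrable (fun ω => if a < W ω ∧ W ω ≤ b then (1:ℝ) else 0) μ := by
    have hg : Measurable (fun t : ℝ => if a < t ∧ t ≤ b then (1:ℝ) else 0) := by
      have : MeasurableSet {t : ℝ | a < t ∧ t ≤ b} := measurableSet_Ioc
      exact Measurable.ite this measurable_const measurable_const
    apply integrable_bdd μ W hW hWpos hg 1
    intro t _
    by_cases h : a < t ∧ t ≤ b <;> simp [h]
  have hblockint : Integrable (fun ω => if a < W ω ∧ W ω ≤ b then (W ω)^2 else 0) μ := by
    have h := (integrable_trunc μ W hW hWpos b).sub (integrable_trunc μ W hW hWpos a)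
    apply h.congr
    refine ae_of_all _ fun ω => ?_
    simp only [Pi.sub_apply]
    by_cases h1 : W ω ≤ a
    · rw [if_pos (le_trans h1 hab), if_pos h1, if_neg (fun hc => absurd h1 (not_le.mpr hc.1))]
      ring
    · by_cases h2 : W ω ≤ b
      · rw [if_pos h2, if_neg h1, if_pos ⟨not_le.mp h1, h2⟩]
        ring
      · rw [if_neg h2, if_neg h1, if_neg (fun hc => h2 hc.2)]
        ring
  have hmeas : (μ {ω | a < W ω ∧ W ω ≤ b}).toReal
      = ∫ ω, (if a < W ω ∧ W ω ≤ b then (1:ℝ) else 0) ∂μ := by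
    have : (fun ω => if a < W ω ∧ W ω ≤ b then (1:ℝ) else 0)
        = Set.indicator {ω | a < W ω ∧ W ω ≤ b} (fun _ => (1:ℝ)) := by
      funext ω
      rw [Set.indicator_apply]
      rfl
    rw [this, integral_indicator_const _ hset]
    simp
    rfl
  rw [hdiff, hmeas]
  constructor
  · rw [← integral_const_mul]
    apply integral_mono (hindint.const_mul _) hblockint
    intro ω
    dsimp only
    by_cases h : a < W ω ∧ W ω ≤ b
    · rw [if_pos h, if_pos h, mul_one]
      nlinarith [h.1]
    · rw [if_neg h, if_neg h, mul_zero]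
  · rw [← integral_const_mul]
    apply integral_mono hblockint (hindint.const_mul _)
    intro ω
    dsimp only
    by_cases h : a < W ω ∧ W ω ≤ b
    · rw [if_pos h, if_pos h, mul_one]
      nlinarith [h.1, h.2, ha.le.trans h.1.le]
    · rw [if_neg h, if_neg h, mul_zero]
end

section
variable {Ω : Type*} [MeasurableSpace Ω] (μ : Measure Ω) [IsProbabilityMeasure μ]
  (W : Ω → ℝ) (hW : Measurable W) (hWpos : ∀ ω, 0 ≤ W ω)

include hW in
lemma tail_block_limit {x r : ℝ} (hx : 0 < x) (hr : 1 < r) :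
    Tendsto (fun N : ℕ => (μ {ω | x < W ω ∧ W ω ≤ x * r^N}).toReal) atTop
      (nhds ((μ {ω | x < W ω}).toReal)) := by
  have hmono : Monotone (fun N : ℕ => {ω | x < W ω ∧ W ω ≤ x * r^N}) := by
    intro m n hmn ω hω
    exact ⟨hω.1, le_trans hω.2 (by
      apply mul_le_mul_of_nonneg_left (pow_le_pow_right₀ hr.le hmn) hx.le)⟩
  have hunion : (⋃ N : ℕ, {ω | x < W ω ∧ W ω ≤ x * r^N}) = {ω | x < W ω} := by
    apply Set.Subset.antisymm
    · intro ω hω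
      obtain ⟨N, hN⟩ := Set.mem_iUnion.mp hω
      exact hN.1
    · intro ω hω
      have htend : Tendsto (fun N : ℕ => x * r^N) atTop atTop :=
        (tendsto_pow_atTop_atTop_of_one_lt hr).const_mul_atTop hx
      obtain ⟨N, hN⟩ := (htend.eventually_ge_atTop (W ω)).exists
      exact Set.mem_iUnion.mpr ⟨N, hω, hN⟩
  have h1 := tendsto_measure_iUnion_atTop (μ := μ) hmono
  rw [hunion] at h1
  have h2 : (μ {ω | x < W ω}) ≠ ⊤ := measure_ne_top μ _
  exact (ENNReal.tendsto_toReal h2).comp h1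

include hW in
lemma block_sum {x r : ℝ} (hx : 0 < x) (hr : 1 < r) (N : ℕ) :
    (μ {ω | x < W ω ∧ W ω ≤ x * r^N}).toReal
      = ∑ k ∈ Finset.range N, (μ {ω | x * r^k < W ω ∧ W ω ≤ x * r^(k+1)}).toReal := by
  induction N with
  | zero =>
    simp only [pow_zero, mul_one, Finset.range_zero, Finset.sum_empty]
    have : {ω | x < W ω ∧ W ω ≤ x} = ∅ := by
      ext ω; simp only [Set.mem_setOf_eq, Set.mem_empty_iff_false, iff_false]
      intro h; linarith [h.1, h.2]
    rw [this]
    simp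
  | succ N ih =>
    have hsplit : {ω | x < W ω ∧ W ω ≤ x * r^(N+1)}
        = {ω | x < W ω ∧ W ω ≤ x * r^N} ∪ {ω | x * r^N < W ω ∧ W ω ≤ x * r^(N+1)} := by
      ext ω
      simp only [Set.mem_setOf_eq, Set.mem_union]
      constructor
      · rintro ⟨h1, h2⟩
        rcases le_or_gt (W ω) (x * r^N) with h | h
        · exact Or.inl ⟨h1, h⟩
        · exact Or.inr ⟨h, h2⟩
      · rintro (⟨h1, h2⟩ | ⟨h1, h2⟩)
        · refine ⟨h1, le_trans h2 ?_⟩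
          apply mul_le_mul_of_nonneg_left (pow_le_pow_right₀ hr.le (by omega)) hx.le
        · have hle : x ≤ x * r^N := by
            nlinarith [one_le_pow₀ (n := N) hr.le]
          exact ⟨lt_of_le_of_lt hle h1, h2⟩
    have hdisj : Disjoint {ω | x < W ω ∧ W ω ≤ x * r^N}
        {ω | x * r^N < W ω ∧ W ω ≤ x * r^(N+1)} := by
      rw [Set.disjoint_left]
      intro ω h1 h2
      exact absurd h1.2 (not_le.mpr h2.1)
    rw [hsplit, measure_union hdisj (block_measurable W hW _ _),
      ENNReal.toReal_add (measure_ne_top μ _) (measure_ne_top μ _), ih,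
      Finset.sum_range_succ]
end

lemma arith_up {ε : ℝ} (h0 : 0 < ε) (h1 : ε ≤ 1/2) :
    ((1+ε^2/100)*(1+ε/4) - (1-ε^2/100)) * ((1+ε/4)/((1+ε/4)-1)) ≤ 1+ε := by
  have h2 : (1+ε/4)-1 = ε/4 := by ring
  rw [h2, ← mul_div_assoc, div_le_iff₀ (by positivity)]
  nlinarith [sq_nonneg ε, pow_pos h0 3]

lemma arith_low {ε : ℝ} (h0 : 0 < ε) (h1 : ε ≤ 1/2) :
    1 - ε ≤ ((1-ε^2/100)*(1+ε/4) - (1+ε^2/100)) / ((1+ε/4)*((1+ε/4)-1)) := by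
  have h2 : (1+ε/4)-1 = ε/4 := by ring
  rw [h2, le_div_iff₀ (by positivity)]
  nlinarith [sq_nonneg ε, pow_pos h0 3]

section
variable {Ω : Type*} [MeasurableSpace Ω] (μ : Measure Ω) [IsProbabilityMeasure μ]
  (W : Ω → ℝ) (hW : Measurable W) (hWpos : ∀ ω, 0 ≤ W ω)

include hW hWpos in
lemma tail_of_U
    (hU : Tendsto (fun t : ℝ => (∫ ω, (if W ω ≤ t then (W ω)^2 else 0) ∂μ) / t) atTop (nhds 1)) :
    Tendsto (fun x : ℝ => x * (μ {ω | x < W ω}).toReal) atTop (nhds 1) := by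
  set U : ℝ → ℝ := fun t => ∫ ω, (if W ω ≤ t then (W ω)^2 else 0) ∂μ with hUdef
  rw [Metric.tendsto_nhds]
  intro ε₀ hε₀
  have hm : 0 < min ε₀ (1/2) := lt_min hε₀ (by norm_num)
  set ε := min ε₀ (1/2) / 2 with hεdef
  have hε : 0 < ε := by positivity
  have hε2 : ε ≤ 1/2 := by
    have := min_le_right ε₀ (1/2)
    rw [hεdef]; linarith
  have hεε₀ : ε < ε₀ := by
    have h1 : min ε₀ (1/2) ≤ ε₀ := min_le_left _ _
    rw [hεdef]; linarith
  set r := 1 + ε/4 with hrdef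
  have hr : 1 < r := by rw [hrdef]; linarith
  have hr0 : 0 < r := by linarith
  have hrne : r ≠ 0 := hr0.ne'
  set ε' := ε^2/100 with hε'def
  have hε' : 0 < ε' := by positivity
  set A := (1+ε')*r - (1-ε') with hAdef
  set B := (1-ε')*r - (1+ε') with hBdef
  have hA0 : 0 ≤ A := by rw [hAdef]; nlinarith
  -- eventual bound on U
  rw [Metric.tendsto_nhds] at hU
  obtain ⟨x₀, hx₀⟩ := eventually_atTop.mp (hU ε' hε')
  -- geometric series facts
  have hrinv : r⁻¹ < 1 := inv_lt_one_of_one_lt₀ hr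
  have hrinv0 : (0:ℝ) ≤ r⁻¹ := by positivity
  have hgeomsum := hasSum_geometric_of_lt_one hrinv0 hrinv
  have hgeom_le : ∀ N : ℕ, ∑ k ∈ Finset.range N, (r⁻¹)^k ≤ (1 - r⁻¹)⁻¹ :=
    fun N => sum_le_hasSum (Finset.range N) (fun i _ => by positivity) hgeomsum
  have hgeom_tendsto := hgeomsum.tendsto_sum_nat
  have hinvfrac : (1 - r⁻¹)⁻¹ = r/(r-1) := by
    have h1 : 1 - r⁻¹ = (r-1)/r := by field_simp
    rw [h1, inv_div]
  filter_upwards [eventually_ge_atTop (max x₀ 1)] with x hx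
  have hx1 : (1:ℝ) ≤ x := le_trans (le_max_right _ _) hx
  have hxx₀ : x₀ ≤ x := le_trans (le_max_left _ _) hx
  have hxpos : (0:ℝ) < x := lt_of_lt_of_le one_pos hx1
  -- U bounds for t ≥ x
  have hUb : ∀ t, x ≤ t → (1-ε')*t ≤ U t ∧ U t ≤ (1+ε')*t := by
    intro t ht
    have htpos : 0 < t := lt_of_lt_of_le hxpos ht
    have h := hx₀ t (le_trans hxx₀ ht)
    rw [Real.dist_eq, abs_lt] at h
    constructor
    · have h1 : 1 - ε' < U t / t := by linarith [h.1]
      rw [lt_div_iff₀ htpos] at h1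
      linarith
    · have h1 : U t / t < 1 + ε' := by linarith [h.2]
      rw [div_lt_iff₀ htpos] at h1
      linarith
  -- per block facts
  have hapos : ∀ k : ℕ, 0 < x * r^k := fun k => by positivity
  have hxle : ∀ k : ℕ, x ≤ x * r^k := fun k => by
    nlinarith [one_le_pow₀ (n := k) hr.le]
  have hble : ∀ k : ℕ, x * r^k ≤ x * r^(k+1) := fun k => by
    have : r^k ≤ r^(k+1) := pow_le_pow_right₀ hr.le (by omega)
    nlinarith
  have hUba : ∀ k : ℕ, U (x * r^(k+1)) - U (x * r^k) ≤ A * (x * r^k) := by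
    intro k
    have h1 := (hUb _ (hxle k)).1
    have h2 := (hUb _ (le_trans (hxle k) (hble k))).2
    have hpow : x * r^(k+1) = (x * r^k) * r := by rw [pow_succ]; ring
    rw [hAdef]
    calc U (x * r^(k+1)) - U (x * r^k) ≤ (1+ε') * (x * r^(k+1)) - (1-ε') * (x * r^k) := by
          linarith
    _ = ((1+ε')*r - (1-ε')) * (x * r^k) := by rw [hpow]; ring
  have hUbb : ∀ k : ℕ, B * (x * r^k) ≤ U (x * r^(k+1)) - U (x * r^k) := by
    intro k
    have h1 := (hUb _ (hxle k)).2
    have h2 := (hUb _ (le_trans (hxle k) (hble k))).1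
    have hpow : x * r^(k+1) = (x * r^k) * r := by rw [pow_succ]; ring
    rw [hBdef]
    calc ((1-ε')*r - (1+ε')) * (x * r^k) = (1-ε') * (x * r^(k+1)) - (1+ε') * (x * r^k) := by
          rw [hpow]; ring
    _ ≤ U (x * r^(k+1)) - U (x * r^k) := by linarith
  have hblock : ∀ k : ℕ,
      (x * r^k)^2 * (μ {ω | x * r^k < W ω ∧ W ω ≤ x * r^(k+1)}).toReal
        ≤ U (x * r^(k+1)) - U (x * r^k)
      ∧ U (x * r^(k+1)) - U (x * r^k)
        ≤ (x * r^(k+1))^2 * (μ {ω | x * r^k < W ω ∧ W ω ≤ x * r^(k+1)}).toReal :=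
    fun k => block_bound μ W hW hWpos (hapos k) (hble k)
  -- upper bound on tail
  have hup_term : ∀ k : ℕ, (μ {ω | x * r^k < W ω ∧ W ω ≤ x * r^(k+1)}).toReal
      ≤ (A/x) * (r⁻¹)^k := by
    intro k
    have h1 := le_trans (hblock k).1 (hUba k)
    have hak := hapos k
    have heq : (A/x) * (r⁻¹)^k = A / (x * r^k) := by
      rw [inv_pow, ← one_div, div_mul_div_comm, mul_one]
    rw [heq, le_div_iff₀ hak]
    nlinarith [h1, hak]
  have hup_sum : ∀ N : ℕ, (μ {ω | x < W ω ∧ W ω ≤ x * r^N}).toReal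
      ≤ (A/x) * (1 - r⁻¹)⁻¹ := by
    intro N
    rw [block_sum μ W hW hxpos hr N]
    calc ∑ k ∈ Finset.range N, (μ {ω | x * r^k < W ω ∧ W ω ≤ x * r^(k+1)}).toReal
        ≤ ∑ k ∈ Finset.range N, (A/x) * (r⁻¹)^k :=
          Finset.sum_le_sum (fun k _ => hup_term k)
    _ = (A/x) * ∑ k ∈ Finset.range N, (r⁻¹)^k := by rw [Finset.mul_sum]
    _ ≤ (A/x) * (1 - r⁻¹)⁻¹ := by
          apply mul_le_mul_of_nonneg_left (hgeom_le N) (by positivity)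
  have hup : x * (μ {ω | x < W ω}).toReal ≤ A * (1 - r⁻¹)⁻¹ := by
    have htail := le_of_tendsto (tail_block_limit μ W hW hxpos hr)
      (Eventually.of_forall hup_sum)
    calc x * (μ {ω | x < W ω}).toReal ≤ x * ((A/x) * (1 - r⁻¹)⁻¹) :=
          mul_le_mul_of_nonneg_left htail hxpos.le
    _ = A * (1 - r⁻¹)⁻¹ := by
          field_simp
  -- lower bound on tail
  have hlow_term : ∀ k : ℕ, (B/(x*r^2)) * (r⁻¹)^k
      ≤ (μ {ω | x * r^k < W ω ∧ W ω ≤ x * r^(k+1)}).toReal := by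
    intro k
    have h1 := le_trans (hUbb k) (hblock k).2
    have hp : r^2 * r^k = r^(k+2) := by
      rw [← pow_add]
      congr 1
      omega
    have heq : (B/(x*r^2)) * (r⁻¹)^k = B / (x * r^(k+2)) := by
      rw [inv_pow, ← one_div, div_mul_div_comm, mul_one, mul_assoc, hp]
    have hsq : (x*r^(k+1))^2 = (x*r^k)*(x*r^(k+2)) := by
      have hp2 : r^(k+1)*r^(k+1) = r^k * r^(k+2) := by
        rw [← pow_add, ← pow_add]
        congr 1
        omega
      calc (x*r^(k+1))^2 = x^2 * (r^(k+1)*r^(k+1)) := by ring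
      _ = x^2 * (r^k * r^(k+2)) := by rw [hp2]
      _ = (x*r^k)*(x*r^(k+2)) := by ring
    rw [hsq] at h1
    rw [heq, div_le_iff₀ (by positivity)]
    have hP : 0 < x * r^k := hapos k
    have hQ : 0 < x * r^(k+2) := by positivity
    nlinarith [h1, hP, hQ]
  have hlow_sum : ∀ N : ℕ, (B/(x*r^2)) * ∑ k ∈ Finset.range N, (r⁻¹)^k
      ≤ (μ {ω | x < W ω}).toReal := by
    intro N
    have hsub : (μ {ω | x < W ω ∧ W ω ≤ x * r^N}).toReal ≤ (μ {ω | x < W ω}).toReal :=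
      ENNReal.toReal_mono (measure_ne_top μ _) (measure_mono (fun ω hω => hω.1))
    calc (B/(x*r^2)) * ∑ k ∈ Finset.range N, (r⁻¹)^k
        = ∑ k ∈ Finset.range N, (B/(x*r^2)) * (r⁻¹)^k := by rw [Finset.mul_sum]
    _ ≤ ∑ k ∈ Finset.range N, (μ {ω | x * r^k < W ω ∧ W ω ≤ x * r^(k+1)}).toReal :=
          Finset.sum_le_sum (fun k _ => hlow_term k)
    _ = (μ {ω | x < W ω ∧ W ω ≤ x * r^N}).toReal := (block_sum μ W hW hxpos hr N).symm
    _ ≤ _ := hsub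
  have hlow : B/r^2 * (1 - r⁻¹)⁻¹ ≤ x * (μ {ω | x < W ω}).toReal := by
    have hlim : Tendsto (fun N : ℕ => (B/(x*r^2)) * ∑ k ∈ Finset.range N, (r⁻¹)^k)
        atTop (nhds ((B/(x*r^2)) * (1 - r⁻¹)⁻¹)) := hgeom_tendsto.const_mul _
    have h1 := le_of_tendsto hlim (Eventually.of_forall hlow_sum)
    calc B/r^2 * (1 - r⁻¹)⁻¹ = (x*B/(x*r^2)) * (1 - r⁻¹)⁻¹ := by
          rw [mul_div_mul_left _ _ hxpos.ne']
    _ = x * ((B/(x*r^2)) * (1 - r⁻¹)⁻¹) := by ring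
    _ ≤ x * (μ {ω | x < W ω}).toReal := mul_le_mul_of_nonneg_left h1 hxpos.le
  -- conclude via arithmetic
  have harithU := arith_up hε hε2
  have harithL := arith_low hε hε2
  rw [← hε'def, ← hrdef, ← hAdef] at harithU
  rw [← hε'def, ← hrdef, ← hBdef] at harithL
  have hupA : A * (1 - r⁻¹)⁻¹ = A * (r/(r-1)) := by rw [hinvfrac]
  have hlowB : B/r^2 * (1 - r⁻¹)⁻¹ = B / (r*(r-1)) := by
    rw [hinvfrac]
    have hr1 : r - 1 ≠ 0 := by
      intro h
      rw [sub_eq_zero] at h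
      exact hr.ne' h
    field_simp
  rw [hupA] at hup
  rw [hlowB] at hlow
  have hub : x * (μ {ω | x < W ω}).toReal ≤ 1 + ε := le_trans hup harithU
  have hlb : 1 - ε ≤ x * (μ {ω | x < W ω}).toReal := le_trans harithL hlow
  rw [Real.dist_eq]
  have : |x * (μ {ω | x < W ω}).toReal - 1| ≤ ε := abs_le.mpr ⟨by linarith, by linarith⟩
  linarith
end

/-- Karamata-type Tauberian statement: if the Laplace transform `χ(λ) = E[e^{-λW}]` of a
nonnegative random variable `W` satisfies `χ''(λ) ~ 1/λ` as `λ → 0+`, then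
`P(W > x) ~ 1/x` as `x → ∞`. -/
theorem tail_asymptotic_of_laplace {Ω : Type*} [MeasurableSpace Ω] (μ : Measure Ω)
    [IsProbabilityMeasure μ] (W : Ω → ℝ) (hW : Measurable W) (hWpos : ∀ ω, 0 ≤ W ω)
    (hχ : Tendsto
      (fun lam : ℝ => lam * deriv (deriv (fun l : ℝ => ∫ ω, Real.exp (-l * W ω) ∂μ)) lam)
      (nhdsWithin 0 (Set.Ioi 0)) (nhds 1)) :
    Tendsto (fun x : ℝ => x * (μ {ω | x < W ω}).toReal) atTop (nhds 1) := by
  have hF : Tendsto (fun l : ℝ => l * ∫ ω, (W ω)^2 * Real.exp (-l * W ω) ∂μ)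
      (nhdsWithin 0 (Set.Ioi 0)) (nhds 1) := by
    apply hχ.congr'
    filter_upwards [self_mem_nhdsWithin] with lam hlam
    rw [deriv_deriv_chi μ W hW hWpos hlam]
  have hK := trunc_tendsto μ W hW hWpos hF
  have hU : Tendsto (fun t : ℝ => (∫ ω, (if W ω ≤ t then (W ω)^2 else 0) ∂μ) / t)
      atTop (nhds 1) := by
    have hcomp := hK.comp tendsto_inv_atTop_nhdsGT_zero
    apply hcomp.congr'
    filter_upwards [eventually_gt_atTop 0] with t ht
    simp only [Function.comp]
    rw [one_div, inv_inv, div_eq_inv_mul]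
  exact tail_of_U μ W hW hWpos hU
end
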